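/- Let k < m ≤ n be natural numbers with m ≥ 1, and suppose A ⊆ {γ < ω_n : cf γ = ω_m} is stationary and carries a square sequence ⟨C_γ : γ ∈ A⟩: each C_γ is club in γ of order type ω_m, consists of ordinals of cofinality < ω_m, and α ∈ C_{γ₁} ∩ C_{γ₂} implies C_{γ₁} ∩ α = C_{γ₂} ∩ α. Then there exists a stationary set S ⊆ {α < ω_n : cf α = ω_k} that does not reflect at any γ ∈ A. -/

import Mathlib

/-!
Coherence makes the position `otp (C δ ∩ α) < ω_m` of a point `α ∈ C δ` independent of `δ`.
The points of cofinality `ω_k` lying on some `C δ` form a stationary set: for a club `D`, some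
`γ ∈ A` is a limit point of `D`, and the club `C γ ∩ D` of `γ` has a point of cofinality
`ω_k < cf γ`. Splitting this set by position into `ω_m < ω_n` pieces, one piece `S` is
stationary, and it meets each `C γ` in at most one point because positions increase along
`C γ`; the part of `C γ` above that point is a club of `γ` missing `S`.
-/

/-- `C` is a closed unbounded (club) subset of the ordinal `γ`:
it is a set of ordinals below `γ`, unbounded in `γ`, and closed
(contains each of its limit points below `γ`). -/
def IsClubIn (C : Set Ordinal) (γ : Ordinal) : Prop :=
  C ⊆ Set.Iio γ ∧ (∀ β < γ, ∃ α ∈ C, β ≤ α) ∧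
    ∀ α < γ, 0 < α → (∀ β < α, ∃ c ∈ C, β < c ∧ c < α) → α ∈ C

/-- `S` is stationary in the ordinal `γ`: it meets every club subset of `γ`. -/
def IsStatIn (S : Set Ordinal) (γ : Ordinal) : Prop :=
  ∀ C, IsClubIn C γ → (S ∩ C).Nonempty

/-- The order type of a set of ordinals. -/
noncomputable def otp (s : Set Ordinal) : Ordinal :=
  Ordinal.type ((· < ·) : s → s → Prop)

open Cardinal Ordinal Set Order Filter Set.Notation

universe u v

theorem Cardinal.isRegular_aleph_natCast (n : ℕ) : (ℵ_ (n : Ordinal.{u})).IsRegular := by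
  cases n with
  | zero => simpa using isRegular_aleph0
  | succ n => exact_mod_cast isRegular_aleph_add_one n

theorem otp_inter_Iio {s : Set Ordinal.{u}} {a : Ordinal.{u}} (ha : a ∈ s) :
    otp (s ∩ Iio a) = typein ((· < ·) : s → s → Prop) ⟨a, ha⟩ := by
  rw [← type_Iio_lt]
  exact RelIso.ordinalType_congr
    ⟨(Equiv.subtypeSubtypeEquivSubtypeInter (· ∈ s) (· < a)).symm, Iff.rfl⟩

theorem otp_inter_Iio_lt {s : Set Ordinal.{u}} {a : Ordinal.{u}} (ha : a ∈ s) :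
    otp (s ∩ Iio a) < otp s := by
  rw [otp_inter_Iio ha]
  exact typein_lt_type _ _

theorem strictMonoOn_otp_inter_Iio (s : Set Ordinal.{u}) :
    StrictMonoOn (fun a ↦ otp (s ∩ Iio a)) s := fun a ha b hb hab ↦ by
  simp only [otp_inter_Iio ha, otp_inter_Iio hb]
  exact (typein_lt_typein _).2 hab

theorem Ordinal.accPt_principal_iff {α : Ordinal.{u}} {D : Set Ordinal.{u}} :
    AccPt α (𝓟 D) ↔ 0 < α ∧ ∀ β < α, ∃ c ∈ D, β < c ∧ c < α := by
  simp [SuccOrder.accPt_principal, Set.Nonempty, pos_iff_ne_zero]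

namespace IsClubIn

variable {C D E : Set Ordinal.{u}} {γ θ α a : Ordinal.{u}}

theorem mem_of_accPt (hC : IsClubIn C γ) (hα : α < γ) (hacc : AccPt α (𝓟 C)) : α ∈ C :=
  hC.2.2 α hα (accPt_principal_iff.1 hacc).1 (accPt_principal_iff.1 hacc).2

theorem isLUB_mem (hC : IsClubIn C γ) {t : Set Ordinal.{u}} (htC : t ⊆ C) (ht : t.Nonempty)
    (hα : IsLUB t α) (hαγ : α < γ) : α ∈ C := by
  by_cases hαt : α ∈ t
  · exact htC hαt
  refine hC.mem_of_accPt hαγ (accPt_principal_iff.2 ⟨?_, fun β hβ ↦ ?_⟩)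
  · obtain ⟨c, hc⟩ := ht
    exact zero_le.trans_lt ((hα.1 hc).lt_of_ne (ne_of_mem_of_not_mem hc hαt))
  · obtain ⟨c, hc, hβc⟩ := (lt_isLUB_iff hα).1 hβ
    exact ⟨c, htC hc, hβc, (hα.1 hc).lt_of_ne (ne_of_mem_of_not_mem hc hαt)⟩

theorem inter_Ioi (hC : IsClubIn C γ) (hγ : IsSuccLimit γ) (ha : a < γ) :
    IsClubIn (C ∩ Ioi a) γ := by
  refine ⟨inter_subset_left.trans hC.1, fun β hβ ↦ ?_, fun α hα h0 hacc ↦ ?_⟩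
  · obtain ⟨c, hc, hc'⟩ := hC.2.1 (max β (succ a)) (max_lt hβ (hγ.succ_lt ha))
    exact ⟨c, ⟨hc, (lt_succ a).trans_le ((le_max_right _ _).trans hc')⟩,
      (le_max_left _ _).trans hc'⟩
  · obtain ⟨c, hc, -, hcα⟩ := hacc 0 h0
    refine ⟨hC.2.2 α hα h0 fun β hβ ↦ ?_, hc.2.trans hcα⟩
    obtain ⟨c, hc, h⟩ := hacc β hβ
    exact ⟨c, hc.1, h⟩

theorem inter_Iio (hD : IsClubIn D θ) (hγθ : γ < θ) (hγ : AccPt γ (𝓟 D)) :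
    IsClubIn (D ∩ Iio γ) γ := by
  refine ⟨inter_subset_right, fun β hβ ↦ ?_, fun α hα h0 hacc ↦ ?_⟩
  · obtain ⟨c, hc, hβc, hcγ⟩ := (accPt_principal_iff.1 hγ).2 β hβ
    exact ⟨c, ⟨hc, hcγ⟩, hβc.le⟩
  · refine ⟨hD.2.2 α (hα.trans hγθ) h0 fun β hβ ↦ ?_, hα⟩
    obtain ⟨c, hc, h⟩ := hacc β hβ
    exact ⟨c, hc.1, h⟩

theorem setOf_accPt (hθ : ℵ₀ < θ.cof) (hD : IsClubIn D θ) :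
    IsClubIn {α | α < θ ∧ AccPt α (𝓟 D)} θ := by
  refine ⟨fun α hα ↦ hα.1, fun β hβ ↦ ?_, fun α hα h0 hacc ↦ ⟨hα, ?_⟩⟩
  · have hθ' : IsSuccLimit θ := one_lt_cof_iff.1 (one_lt_aleph0.trans hθ)
    have hnext : ∀ x < θ, ∃ y, y ∈ D ∧ x < y := fun x hx ↦ by
      obtain ⟨y, hy, hxy⟩ := hD.2.1 (succ x) (hθ'.succ_lt hx)
      exact ⟨y, hy, (lt_succ x).trans_le hxy⟩
    choose! f hfD hf using hnext
    set d : ℕ → Ordinal.{u} := fun i ↦ f^[i] β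
    have hd_succ (i : ℕ) : d (i + 1) = f (d i) := Function.iterate_succ_apply' f i β
    have hdθ (i : ℕ) : d i < θ := by
      induction i with
      | zero => exact hβ
      | succ i ih => rw [hd_succ]; exact hD.1 (hfD _ ih)
    have hd_lt (i : ℕ) : d i < d (i + 1) := by rw [hd_succ]; exact hf _ (hdθ i)
    have hd_le (i : ℕ) : d i ≤ ⨆ j, d j := Ordinal.le_iSup d i
    refine ⟨⨆ i, d i, ⟨lift_iSup_lt_of_lt_cof (by simpa using hθ) hdθ, ?_⟩, hd_le 0⟩
    refine accPt_principal_iff.2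
      ⟨zero_le.trans_lt ((hd_lt 0).trans_le (hd_le 1)), fun b hb ↦ ?_⟩
    obtain ⟨i, hi⟩ := Ordinal.lt_iSup_iff.1 hb
    refine ⟨d (i + 1), ?_, hi.trans (hd_lt i), (hd_lt (i + 1)).trans_le (hd_le (i + 2))⟩
    rw [hd_succ]
    exact hfD _ (hdθ i)
  · refine accPt_principal_iff.2 ⟨h0, fun β hβ ↦ ?_⟩
    obtain ⟨c, hc, hβc, hcα⟩ := hacc β hβ
    obtain ⟨d, hd, hβd, hdc⟩ := (accPt_principal_iff.1 hc.2).2 β hβc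
    exact ⟨d, hd, hβd, hdc.trans hcα⟩

theorem exists_cof_eq {κ : Cardinal.{u}} (hE : IsClubIn E γ) (hκ : κ.IsRegular)
    (hκγ : κ < γ.cof) : ∃ α ∈ E, α.cof = κ := by
  have hγ : IsSuccLimit γ :=
    one_lt_cof_iff.1 (one_lt_aleph0.trans_le (hκ.aleph0_le.trans hκγ.le))
  -- `E ∪ Ici γ` is enumerated by a normal function `e`, and `γ = e t` with `t` a limit of
  -- cofinality `cf γ > κ`; so `e κ.ord ∈ E`, and it has cofinality `cf κ.ord = κ`.
  set E' := E ∪ Ici γ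
  have hE' : ¬ BddAbove E' := not_bddAbove_iff.2 fun x ↦
    ⟨max (succ x) γ, Or.inr (mem_Ici.2 (le_max_right _ _)),
      (lt_succ x).trans_le (le_max_left _ _)⟩
  set e := enumOrd E'
  have he : IsNormal e := by
    refine isNormal_enumOrd (fun t ht hne hbdd ↦ ?_) hE'
    rcases lt_or_ge (sSup t) γ with hlt | hge
    · refine Or.inl (hE.isLUB_mem (fun x hx ↦ ?_) hne (isLUB_csSup hne hbdd) hlt)
      exact (ht hx).resolve_right (not_le.2 ((le_csSup hbdd hx).trans_lt hlt))
    · exact Or.inr hge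
  obtain ⟨t, ht⟩ : ∃ t, e t = γ := enumOrd_surjective hE' (Or.inr self_mem_Ici)
  have hmemE (ξ : Ordinal.{u}) (hξ : ξ < t) : e ξ ∈ E :=
    (enumOrd_mem hE' ξ).resolve_right (not_le.2 (ht ▸ he.strictMono hξ))
  have hcofinal (β : Ordinal.{u}) (hβ : β < γ) : ∃ r < t, β < e r := by
    obtain ⟨c, hc, hβc⟩ := hE.2.1 (succ β) (hγ.succ_lt hβ)
    obtain ⟨r, rfl⟩ := enumOrd_surjective hE' (Or.inl hc : c ∈ E')
    exact ⟨r, he.strictMono.lt_iff_lt.1 (ht ▸ hE.1 hc), (lt_succ β).trans_le hβc⟩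
  have ht_lim : IsSuccLimit t := by
    refine isSuccLimit_iff.2 ⟨fun h0 ↦ ?_, isSuccPrelimit_iff_succ_lt.2 fun ξ hξ ↦ ?_⟩
    · obtain ⟨r, hr, -⟩ := hcofinal 0 hγ.bot_lt
      simp [h0] at hr
    · obtain ⟨r, hrt, hξr⟩ := hcofinal (e ξ) (ht ▸ he.strictMono hξ)
      exact (succ_le_of_lt (he.strictMono.lt_iff_lt.1 hξr)).trans_lt hrt
  have hκt : κ.ord < t := by
    by_contra! h
    have hcof := cof_map_of_isNormal he ht_lim
    rw [ht] at hcof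
    exact hκγ.not_ge (hcof ▸ (cof_le_card t).trans ((card_le_card h).trans (card_ord κ).le))
  refine ⟨_, hmemE _ hκt, ?_⟩
  rw [cof_map_of_isNormal he (isSuccLimit_ord hκ.aleph0_le), hκ.cof_ord]

end IsClubIn

theorem isClubIn_iff_isClub {C : Set Ordinal.{u}} {γ : Ordinal.{u}} :
    IsClubIn C γ ↔ C ⊆ Iio γ ∧ IsClub (Iio γ ↓∩ C) := by
  constructor
  · intro hC
    refine ⟨hC.1, ⟨dirSupClosed_iff_of_linearOrder.2 fun d hd hne a ha ↦ ?_, fun a ↦ ?_⟩⟩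
    · refine hC.isLUB_mem (t := Subtype.val '' d) (image_subset_iff.2 hd) (hne.image _)
        ⟨?_, ?_⟩ a.2
      · rintro _ ⟨x, hx, rfl⟩
        exact ha.1 hx
      · intro b hb
        by_cases hbγ : b < γ
        · exact ha.2 (show (⟨b, hbγ⟩ : Iio γ) ∈ upperBounds d from
            fun x hx ↦ hb ⟨x, hx, rfl⟩)
        · exact a.2.le.trans (not_lt.1 hbγ)
    · obtain ⟨c, hc, hac⟩ := hC.2.1 a a.2
      exact ⟨⟨c, hC.1 hc⟩, hc, hac⟩
  · rintro ⟨hCγ, hclub⟩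
    refine ⟨hCγ, fun β hβ ↦ ?_, fun α hα h0 hacc ↦ ?_⟩
    · obtain ⟨c, hc, hβc⟩ := hclub.isCofinal ⟨β, hβ⟩
      exact ⟨c, hc, hβc⟩
    · obtain ⟨c₀, hc₀, -, hc₀α⟩ := hacc 0 h0
      refine hclub.isLUB_mem (t := {x | x.1 ∈ C ∧ x.1 < α}) (x := ⟨α, hα⟩) (fun x hx ↦ hx.1)
        ⟨⟨c₀, hc₀α.trans hα⟩, hc₀, hc₀α⟩ ⟨fun x hx ↦ hx.2.le, fun b hb ↦ ?_⟩
      by_contra! hbα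
      obtain ⟨c, hc, hbc, hcα⟩ := hacc b hbα
      exact (hb (a := ⟨c, hcα.trans hα⟩) ⟨hc, hcα⟩).not_gt hbc

theorem isStatIn_iff_isStationary {S : Set Ordinal.{u}} {γ : Ordinal.{u}} :
    IsStatIn S γ ↔ IsStationary (Iio γ ↓∩ S) := by
  constructor
  · intro hS t ht
    obtain ⟨_, hxS, ⟨x, hxt, rfl⟩⟩ := hS (Subtype.val '' t)
      (isClubIn_iff_isClub.2 ⟨by simp, by rwa [preimage_val_image_val_eq_self]⟩)
    exact ⟨x, hxS, hxt⟩
  · intro hS C hC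
    obtain ⟨x, hxS, hxC⟩ := hS (isClubIn_iff_isClub.1 hC).2
    exact ⟨x, hxS, hxC⟩

theorem Ordinal.cof_Iio_ne_aleph0 {θ : Ordinal.{u}} (hθ : θ.cof ≠ ℵ₀) :
    Order.cof (Iio θ) ≠ ℵ₀ := by
  rwa [cof_Iio, ← lift_cof, Ne, lift_eq_aleph0]

theorem IsClubIn.inter {C D : Set Ordinal.{u}} {γ : Ordinal.{u}} (hγ : γ.cof ≠ ℵ₀)
    (hC : IsClubIn C γ) (hD : IsClubIn D γ) : IsClubIn (C ∩ D) γ := by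
  rw [isClubIn_iff_isClub] at *
  exact ⟨inter_subset_left.trans hC.1, hC.2.inter (cof_Iio_ne_aleph0 hγ) hD.2⟩

theorem isStatIn_iUnion_iff {ι : Type v} {T : ι → Set Ordinal.{u}} {θ : Ordinal.{u}}
    (hθ : θ.cof ≠ ℵ₀) (hι : lift.{u} #ι < lift.{v} θ.cof) :
    IsStatIn (⋃ i, T i) θ ↔ ∃ i, IsStatIn (T i) θ := by
  simp only [isStatIn_iff_isStationary, preimage_iUnion]
  refine isStationary_iUnion_iff (cof_Iio_ne_aleph0 hθ) ?_
  rw [cof_Iio, ← lift_cof, Cardinal.lift_lift]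
  simpa only [Cardinal.lift_lift, Cardinal.lift_umax] using lift_strictMono.{_, u + 1} hι

theorem IsStatIn.mono {S T : Set Ordinal.{u}} {γ : Ordinal.{u}} (hS : IsStatIn S γ)
    (h : S ⊆ T) : IsStatIn T γ :=
  fun C hC ↦ (hS C hC).mono (inter_subset_inter_left _ h)

theorem not_isStatIn_inter_Iio_of_subsingleton {T C : Set Ordinal.{u}} {γ : Ordinal.{u}}
    (hγ : IsSuccLimit γ) (hC : IsClubIn C γ) (hT : (T ∩ C).Subsingleton) :
    ¬ IsStatIn (T ∩ Iio γ) γ := by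
  intro hstat
  obtain ⟨a, haγ, ha⟩ : ∃ a < γ, ∀ x ∈ T ∩ C, x = a := by
    rcases (T ∩ C).eq_empty_or_nonempty with h | ⟨a, ha⟩
    · exact ⟨0, hγ.pos, by simp [h]⟩
    · exact ⟨a, hC.1 ha.2, fun x hx ↦ hT hx ha⟩
  obtain ⟨x, ⟨hxT, -⟩, hxC, hax⟩ := hstat _ (hC.inter_Ioi hγ haγ)
  exact hax.ne' (ha x ⟨hxT, hxC⟩)

theorem isStatIn_biUnion_inter_setOf_cof_eq {θ : Ordinal.{u}} {κ : Cardinal.{u}}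
    {A : Set Ordinal.{u}} {C : Ordinal.{u} → Set Ordinal.{u}} (hθ : ℵ₀ < θ.cof)
    (hκ : κ.IsRegular) (hA : ∀ γ ∈ A, κ < γ.cof) (hAstat : IsStatIn A θ)
    (hC : ∀ γ ∈ A, IsClubIn (C γ) γ) :
    IsStatIn ((⋃ γ ∈ A, C γ) ∩ {α | α.cof = κ}) θ := by
  intro D hD
  obtain ⟨γ, hγA, hγθ, hγD⟩ := hAstat _ (hD.setOf_accPt hθ)
  have hγ : ℵ₀ < γ.cof := hκ.aleph0_le.trans_lt (hA γ hγA)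
  obtain ⟨α, ⟨hαC, hαD, -⟩, hα⟩ :=
    ((hC γ hγA).inter hγ.ne' (hD.inter_Iio hγθ hγD)).exists_cof_eq hκ (hA γ hγA)
  exact ⟨α, ⟨mem_biUnion hγA hαC, hα⟩, hαD⟩

def squareLevel (A : Set Ordinal.{u}) (C : Ordinal.{u} → Set Ordinal.{u})
    (ξ : Ordinal.{u + 1}) : Set Ordinal.{u} :=
  {α | ∃ δ ∈ A, α ∈ C δ ∧ otp (C δ ∩ Iio α) = ξ}

section squareLevel

variable {A : Set Ordinal.{u}} {C : Ordinal.{u} → Set Ordinal.{u}}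

theorem biUnion_subset_iUnion_squareLevel {μ : Ordinal.{u + 1}}
    (hC : ∀ γ ∈ A, otp (C γ) ≤ μ) : ⋃ γ ∈ A, C γ ⊆ ⋃ ξ : Iio μ, squareLevel A C ξ := by
  simp only [iUnion₂_subset_iff]
  intro γ hγ α hα
  exact mem_iUnion.2 ⟨⟨_, (otp_inter_Iio_lt hα).trans_le (hC γ hγ)⟩, γ, hγ, hα, rfl⟩

theorem squareLevel_inter_subsingleton
    (hcoh : ∀ γ₁ ∈ A, ∀ γ₂ ∈ A, ∀ α, α ∈ C γ₁ ∩ C γ₂ → C γ₁ ∩ Iio α = C γ₂ ∩ Iio α)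
    {γ : Ordinal.{u}} (hγ : γ ∈ A) (ξ : Ordinal.{u + 1}) :
    (squareLevel A C ξ ∩ C γ).Subsingleton := by
  have hlevel : ∀ α ∈ squareLevel A C ξ ∩ C γ, otp (C γ ∩ Iio α) = ξ := by
    rintro α ⟨⟨δ, hδ, hαδ, rfl⟩, hαγ⟩
    rw [hcoh γ hγ δ hδ α ⟨hαγ, hαδ⟩]
  intro α hα β hβ
  exact (strictMonoOn_otp_inter_Iio (C γ)).injOn hα.2 hβ.2
    ((hlevel α hα).trans (hlevel β hβ).symm)

theorem exists_isStatIn_squareLevel_inter {θ : Ordinal.{u}} {μ : Ordinal.{u + 1}}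
    {X : Set Ordinal.{u}} (hθ : θ.cof ≠ ℵ₀) (hμ : μ.card < lift.{u + 1} θ.cof)
    (hC : ∀ γ ∈ A, otp (C γ) ≤ μ) (hS : IsStatIn ((⋃ γ ∈ A, C γ) ∩ X) θ) :
    ∃ ξ, IsStatIn (squareLevel A C ξ ∩ X) θ := by
  have hcover : (⋃ γ ∈ A, C γ) ∩ X ⊆ ⋃ ξ : Iio μ, squareLevel A C ξ ∩ X := by
    rw [← iUnion_inter]
    exact inter_subset_inter_left _ (biUnion_subset_iUnion_squareLevel hC)
  obtain ⟨ξ, hξ⟩ := (isStatIn_iUnion_iff hθ (by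
    simpa only [Cardinal.mk_Iio_ordinal, Cardinal.lift_lift, Cardinal.lift_umax] using
      lift_strictMono.{u + 1, u + 2} hμ)).1 (hS.mono hcover)
  exact ⟨ξ, hξ⟩

end squareLevel

theorem stmt9_general (k m n : ℕ) (hkm : k < m)
    (A : Set Ordinal)
    (hA : A ⊆ {γ | γ < (Cardinal.aleph n).ord ∧ Ordinal.cof γ = Cardinal.aleph m})
    (hAstat : IsStatIn A (Cardinal.aleph n).ord)
    (C : Ordinal → Set Ordinal)
    (hclub : ∀ γ ∈ A, IsClubIn (C γ) γ)
    (hotp : ∀ γ ∈ A, otp (C γ) = (Cardinal.aleph m).ord)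
    (hcoh : ∀ γ₁ ∈ A, ∀ γ₂ ∈ A, ∀ α, α ∈ C γ₁ ∩ C γ₂ →
      C γ₁ ∩ Set.Iio α = C γ₂ ∩ Set.Iio α) :
    ∃ S : Set Ordinal,
      S ⊆ {α | α < (Cardinal.aleph n).ord ∧ Ordinal.cof α = Cardinal.aleph k} ∧
      IsStatIn S (Cardinal.aleph n).ord ∧
      ∀ γ ∈ A, ¬ IsStatIn (S ∩ Set.Iio γ) γ := by
  obtain ⟨γ₀, hγ₀⟩ := (isStatIn_iff_isStationary.1 hAstat).nonempty
  have hmn : ℵ_ (m : Ordinal) < ℵ_ n := by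
    rw [← (hA hγ₀).2]
    exact (cof_le_card _).trans_lt (lt_ord.1 (hA hγ₀).1)
  have hθ : ℵ₀ < (ℵ_ n).ord.cof := by
    rw [(isRegular_aleph_natCast n).cof_ord]
    exact (aleph0_le_aleph m).trans_lt hmn
  have hkm' : ℵ_ (k : Ordinal) < ℵ_ m := aleph_lt_aleph.2 (by exact_mod_cast hkm)
  have hS := isStatIn_biUnion_inter_setOf_cof_eq hθ (isRegular_aleph_natCast k)
    (fun γ hγ ↦ (hA hγ).2 ▸ hkm') hAstat hclub
  obtain ⟨ξ, hξ⟩ := exists_isStatIn_squareLevel_inter hθ.ne'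
    (by rw [(isRegular_aleph_natCast n).cof_ord]; simpa using hmn) (fun γ hγ ↦ (hotp γ hγ).le) hS
  refine ⟨squareLevel A C ξ ∩ {α | α.cof = ℵ_ k}, ?_, hξ, fun γ hγ ↦ ?_⟩
  · rintro α ⟨⟨δ, hδ, hαδ, -⟩, hα⟩
    exact ⟨((hclub δ hδ).1 hαδ).trans (hA hδ).1, hα⟩
  · have hγ_lim : IsSuccLimit γ :=
      one_lt_cof_iff.1 ((hA hγ).2 ▸ one_lt_aleph0.trans_le (aleph0_le_aleph m))
    exact not_isStatIn_inter_Iio_of_subsingleton hγ_lim (hclub γ hγ) <|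
      (squareLevel_inter_subsingleton hcoh hγ ξ).anti (inter_subset_inter_left _ inter_subset_left)

/-- Let `k < m ≤ n`, `m ≥ 1`. If `A ⊆ {γ < ω_n : cf γ = ω_m}` is
stationary and carries a square sequence (each `C γ` club in `γ` of order type
`ω_m`, consisting of ordinals of cofinality `< ω_m`, coherent), then some
stationary `S ⊆ {α < ω_n : cf α = ω_k}` does not reflect at any `γ ∈ A`. -/
theorem stmt9 (k m n : ℕ) (hkm : k < m) (hmn : m ≤ n) (hm : 1 ≤ m)
    (A : Set Ordinal)
    (hA : A ⊆ {γ | γ < (Cardinal.aleph n).ord ∧ Ordinal.cof γ = Cardinal.aleph m})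
    (hAstat : IsStatIn A (Cardinal.aleph n).ord)
    (C : Ordinal → Set Ordinal)
    (hclub : ∀ γ ∈ A, IsClubIn (C γ) γ)
    (hotp : ∀ γ ∈ A, otp (C γ) = (Cardinal.aleph m).ord)
    (hcof : ∀ γ ∈ A, ∀ α ∈ C γ, Ordinal.cof α < Cardinal.aleph m)
    (hcoh : ∀ γ₁ ∈ A, ∀ γ₂ ∈ A, ∀ α, α ∈ C γ₁ ∩ C γ₂ →
      C γ₁ ∩ Set.Iio α = C γ₂ ∩ Set.Iio α) :
    ∃ S : Set Ordinal,
      S ⊆ {α | α < (Cardinal.aleph n).ord ∧ Ordinal.cof α = Cardinal.aleph k} ∧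
      IsStatIn S (Cardinal.aleph n).ord ∧
      ∀ γ ∈ A, ¬ IsStatIn (S ∩ Set.Iio γ) γ :=
  stmt9_general k m n hkm A hA hAstat C hclub hotp hcoh
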